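/- arXiv:1407.4113 — 7 statements merged into one kernel-verified Lean document; each statement's English description precedes it below -/
import Mathlib

section
/- Assume moreover that among any three pairwise distinct indices i, j, k at least one of the pairs satisfies p = 0 (no triangles in the Dynkin diagram). A cubic form C on Y, with associated forms B and T, is W-invariant if and only if: (1) C(e_i) = 0 for all i; (2) B(e_j, e_i) = p(j, i)·B(e_i, e_j) for all i ≠ j; and (3) for all pairwise distinct i, j, k, both T(e_i, e_j, e_k) = 0 and p(j, i)·B(e_i, e_k) + p(k, i)·B(e_i, e_j) = 0. -/
/-- `p : Fin n → Fin n → ℤ` is a generalized Cartan matrix. -/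
def IsGCM {n : ℕ} (p : Fin n → Fin n → ℤ) : Prop :=
  (∀ i, p i i = 2) ∧ (∀ i j, i ≠ j → p i j ≤ 0) ∧ (∀ i j, i ≠ j → (p i j = 0 ↔ p j i = 0))

/-- The simple reflection `s_j(y) = y − α_j(y)·e_j`, where `α_j(e_i) = p i j`. -/
def simpleRefl {n : ℕ} (p : Fin n → Fin n → ℤ) (j : Fin n) (y : Fin n → ℤ) : Fin n → ℤ :=
  y - (∑ i, y i * p i j) • Pi.single j 1

/-- `C : ℤⁿ → ℤ` is a cubic form. -/
def IsCubicForm {n : ℕ} (C : (Fin n → ℤ) → ℤ) : Prop :=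
  ∃ P : MvPolynomial (Fin n) ℤ, P.IsHomogeneous 3 ∧ ∀ y, C y = MvPolynomial.eval y P

/-- The form `B` associated to a cubic form `C`. -/
def assocB {n : ℕ} (C : (Fin n → ℤ) → ℤ) (y₁ y₂ : Fin n → ℤ) : ℤ :=
  (C (y₂ + y₁) + C (y₂ - y₁)) / 2 - C y₂

/-- The form `T` associated to a cubic form `C`. -/
def assocT {n : ℕ} (C : (Fin n → ℤ) → ℤ) (y₁ y₂ y₃ : Fin n → ℤ) : ℤ :=
  C (y₁ + y₂ + y₃) - C (y₁ + y₂) - C (y₂ + y₃) - C (y₁ + y₃) + C y₁ + C y₂ + C y₃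

/-!
Over `ℤ` a homogeneous cubic polynomial is the diagonal `y ↦ Φ y y y` of a (not necessarily
symmetric) trilinear form `Φ`. Then `B(x, y) = Φ(x,x,y) + Φ(x,y,x) + Φ(y,x,x)` and `T` is the full
symmetrization of `Φ`, so every relation between `C`, `B` and `T` is a polynomial identity.

For a linear form `α` and a vector `e` with `α e = 2`, expanding `C (y - α y • e)` shows that
invariance under `y ↦ y - α y • e` amounts to `C e = 0` together with the vanishing of
`D y = B(y, e) - α y * B(e, y)`: invariance at `y` and at `y + e` gives `α y * D y = 0` and
`(α y + 2) * D y = 0`, because `D` is unchanged by `y ↦ y + e` once `C e = 0`. Since `D` is the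
diagonal of a bilinear form, it vanishes iff its polarization
`T(x, y, e) - α x * B(e, y) - α y * B(e, x)` vanishes on all pairs of basis vectors.

Sorting these conditions for `e = eⱼ` by which indices coincide yields (1), (2), and for distinct
indices a formula for `T(eⱼ, eₖ, eᵢ)` in terms of `B`. Without triangles every triple of distinct
indices contains a pair with `p = 0`, and the formula taken at that pair forces `T = 0`.
-/

theorem Finsupp.exists_prod_pow_eq_mul_mul_of_degree_eq_three {σ R : Type*} [CommMonoid R]
    {d : σ →₀ ℕ} (hd : d.degree = 3) :
    ∃ a b c : σ, ∀ y : σ → R, (d.prod fun i k => y i ^ k) = y a * y b * y c := by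
  obtain ⟨a, b, c, h⟩ := Multiset.card_eq_three.mp (d.card_toMultiset.trans hd)
  refine ⟨a, b, c, fun y => ?_⟩
  rw [← Finsupp.prod_mapDomain_index (f := y) (h := fun r k => r ^ k) (fun _ => pow_zero _)
    (fun _ _ _ => pow_add _ _ _), ← Finsupp.prod_toMultiset, ← Finsupp.toMultiset_map, h]
  simp [mul_assoc]

theorem MvPolynomial.IsHomogeneous.exists_trilinear_eval {σ R : Type*} [CommRing R]
    {P : MvPolynomial σ R} (hP : P.IsHomogeneous 3) :
    ∃ Φ : (σ → R) →ₗ[R] (σ → R) →ₗ[R] (σ → R) →ₗ[R] R, ∀ y, eval y P = Φ y y y := by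
  rw [P.as_sum]
  refine Finset.sum_induction _ (fun Q => ∃ Φ : (σ → R) →ₗ[R] (σ → R) →ₗ[R] (σ → R) →ₗ[R] R,
    ∀ y, eval y Q = Φ y y y) ?_ ⟨0, by simp⟩ fun d hd => ?_
  · rintro Q Q' ⟨Φ, hΦ⟩ ⟨Φ', hΦ'⟩
    exact ⟨Φ + Φ', by simp [hΦ, hΦ']⟩
  · obtain ⟨a, b, c, habc⟩ := Finsupp.exists_prod_pow_eq_mul_mul_of_degree_eq_three (R := R)
      (by rw [Finsupp.degree_eq_weight_one]; exact hP (mem_support_iff.mp hd))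
    refine ⟨P.coeff d • ((LinearMap.mul R R).compl₁₂ (LinearMap.proj a) (LinearMap.proj b)).compr₂
      (LinearMap.toSpanSingleton R _ (LinearMap.proj c)), fun y => ?_⟩
    simp [eval_monomial, habc y, mul_assoc]

theorem LinearMap.apply_self_eq_zero_of_add_flip_single_eq_zero {ι : Type*} [Finite ι]
    [DecidableEq ι] (Ψ : (ι → ℤ) →ₗ[ℤ] (ι → ℤ) →ₗ[ℤ] ℤ)
    (h : ∀ i k, Ψ (Pi.single i 1) (Pi.single k 1) + Ψ (Pi.single k 1) (Pi.single i 1) = 0)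
    (y : ι → ℤ) : Ψ y y = 0 := by
  have hsymm : Ψ + Ψ.flip = 0 :=
    LinearMap.ext_basis (Pi.basisFun ℤ ι) (Pi.basisFun ℤ ι) fun i k => by simpa using h i k
  have := congr($hsymm y y)
  simp only [LinearMap.add_apply, LinearMap.flip_apply, LinearMap.zero_apply] at this
  omega

section

variable {n : ℕ} {C : (Fin n → ℤ) → ℤ} {p : Fin n → Fin n → ℤ}

theorem assocT_rotate (x y z : Fin n → ℤ) : assocT C x y z = assocT C y z x := by
  unfold assocT
  rw [add_rotate x y z, add_comm z x, add_comm y x]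
  ring

theorem assocT_swap₂₃ (x y z : Fin n → ℤ) : assocT C x y z = assocT C x z y := by
  unfold assocT
  rw [add_right_comm x y z, add_comm z y]
  ring

section Trilinear
variable {Φ : (Fin n → ℤ) →ₗ[ℤ] (Fin n → ℤ) →ₗ[ℤ] (Fin n → ℤ) →ₗ[ℤ] ℤ}
  (hΦ : ∀ y, C y = Φ y y y)
include hΦ

theorem assocB_eq_of_trilinear (x y : Fin n → ℤ) :
    assocB C x y = Φ x x y + Φ x y x + Φ y x x := by
  have h : C (y + x) + C (y - x) = 2 * (Φ y y y + (Φ x x y + Φ x y x + Φ y x x)) := by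
    simp only [hΦ, map_add, map_sub, LinearMap.add_apply, LinearMap.sub_apply]
    ring
  rw [assocB, h, Int.mul_ediv_cancel_left _ two_ne_zero, hΦ]
  ring

theorem assocT_eq_of_trilinear (x y z : Fin n → ℤ) :
    assocT C x y z = Φ x y z + Φ x z y + Φ y x z + Φ y z x + Φ z x y + Φ z y x := by
  simp only [assocT, hΦ, map_add, LinearMap.add_apply]
  ring

end Trilinear

theorem IsCubicForm.exists_trilinear (hC : IsCubicForm C) :
    ∃ Φ : (Fin n → ℤ) →ₗ[ℤ] (Fin n → ℤ) →ₗ[ℤ] (Fin n → ℤ) →ₗ[ℤ] ℤ, ∀ y, C y = Φ y y y := by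
  obtain ⟨P, hP, hCP⟩ := hC
  obtain ⟨Φ, hΦ⟩ := hP.exists_trilinear_eval
  exact ⟨Φ, fun y => (hCP y).trans (hΦ y)⟩

def simpleRoot (p : Fin n → Fin n → ℤ) (j : Fin n) : (Fin n → ℤ) →ₗ[ℤ] ℤ where
  toFun y := ∑ i, y i * p i j
  map_add' x y := by simp only [Pi.add_apply, add_mul, Finset.sum_add_distrib]
  map_smul' t y := by
    simp only [Pi.smul_apply, smul_eq_mul, mul_assoc, Finset.mul_sum, RingHom.id_apply]

theorem simpleRoot_single (p : Fin n → Fin n → ℤ) (i j : Fin n) :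
    simpleRoot p j (Pi.single i 1) = p i j := by
  simp [simpleRoot, Pi.single_apply]

namespace IsCubicForm

variable (hC : IsCubicForm C)
include hC

theorem apply_add_smul (t : ℤ) (x y : Fin n → ℤ) :
    C (y + t • x) = C y + t * assocB C y x + t ^ 2 * assocB C x y + t ^ 3 * C x := by
  obtain ⟨Φ, hΦ⟩ := hC.exists_trilinear
  simp only [assocB_eq_of_trilinear hΦ, hΦ, map_add, map_smul, LinearMap.add_apply,
    LinearMap.smul_apply, smul_eq_mul]
  ring

theorem assocB_self (x : Fin n → ℤ) : assocB C x x = 3 * C x := by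
  obtain ⟨Φ, hΦ⟩ := hC.exists_trilinear
  rw [assocB_eq_of_trilinear hΦ, hΦ]
  ring

theorem assocT_self_left (x y : Fin n → ℤ) : assocT C x x y = 2 * assocB C x y := by
  obtain ⟨Φ, hΦ⟩ := hC.exists_trilinear
  rw [assocB_eq_of_trilinear hΦ, assocT_eq_of_trilinear hΦ]
  ring

theorem assocB_add_left (x y z : Fin n → ℤ) :
    assocB C (x + y) z = assocB C x z + assocB C y z + assocT C x y z := by
  obtain ⟨Φ, hΦ⟩ := hC.exists_trilinear
  simp only [assocB_eq_of_trilinear hΦ, assocT_eq_of_trilinear hΦ, map_add, LinearMap.add_apply]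
  ring

theorem assocB_add_right (x y z : Fin n → ℤ) :
    assocB C x (y + z) = assocB C x y + assocB C x z := by
  obtain ⟨Φ, hΦ⟩ := hC.exists_trilinear
  simp only [assocB_eq_of_trilinear hΦ, map_add, LinearMap.add_apply]
  ring

theorem reflection_invariant_iff (α : (Fin n → ℤ) →ₗ[ℤ] ℤ) (e : Fin n → ℤ) (he : α e = 2) :
    (∀ y, C (y - α y • e) = C y) ↔ C e = 0 ∧ ∀ y, assocB C y e = α y * assocB C e y := by
  have expand : ∀ y, C (y - α y • e) =
      C y - α y * (assocB C y e - α y * assocB C e y) - α y ^ 3 * C e := by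
    intro y
    rw [sub_eq_add_neg, ← neg_smul, hC.apply_add_smul]
    ring
  constructor
  · intro h
    have hCe : C e = 0 := by
      have := h e
      rw [expand, he, hC.assocB_self] at this
      linarith
    refine ⟨hCe, fun y => ?_⟩
    have h₁ := h y
    have h₂ := h (y + e)
    rw [expand] at h₁ h₂
    rw [map_add, he, hC.assocB_add_left, hC.assocB_add_right, assocT_rotate, hC.assocT_self_left,
      hC.assocB_self, hCe] at h₂
    have : 2 * (assocB C y e - α y * assocB C e y) = 0 := by
      linear_combination h₁ - h₂ + α y ^ 3 * hCe
    linarith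
  · rintro ⟨hCe, hB⟩ y
    rw [expand, hCe, ← hB, sub_self]
    ring

theorem exists_bilinear_apply_self (α : (Fin n → ℤ) →ₗ[ℤ] ℤ) (e : Fin n → ℤ) :
    ∃ Ψ : (Fin n → ℤ) →ₗ[ℤ] (Fin n → ℤ) →ₗ[ℤ] ℤ,
      ∀ y, Ψ y y = assocB C y e - α y * assocB C e y := by
  obtain ⟨Φ, hΦ⟩ := hC.exists_trilinear
  refine ⟨Φ.compr₂ (LinearMap.applyₗ e) + Φ.flip e + Φ e -
    (LinearMap.mul ℤ ℤ).compl₁₂ α (Φ e e + (Φ e).flip e + (Φ.flip e).flip e), fun y => ?_⟩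
  simp only [assocB_eq_of_trilinear hΦ, LinearMap.add_apply, LinearMap.sub_apply,
    LinearMap.compr₂_apply, LinearMap.applyₗ_apply_apply, LinearMap.flip_apply,
    LinearMap.compl₁₂_apply, LinearMap.mul_apply']

theorem forall_assocB_eq_iff (α : (Fin n → ℤ) →ₗ[ℤ] ℤ) (e : Fin n → ℤ) :
    (∀ y, assocB C y e = α y * assocB C e y) ↔
      ∀ i k, assocT C (Pi.single i 1) (Pi.single k 1) e =
        α (Pi.single i 1) * assocB C e (Pi.single k 1) +
          α (Pi.single k 1) * assocB C e (Pi.single i 1) := by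
  have polar : ∀ x y, (assocB C (x + y) e - α (x + y) * assocB C e (x + y)) -
      (assocB C x e - α x * assocB C e x) - (assocB C y e - α y * assocB C e y) =
        assocT C x y e - α x * assocB C e y - α y * assocB C e x := by
    intro x y
    rw [hC.assocB_add_left, hC.assocB_add_right, map_add]
    ring
  constructor
  · intro h i k
    linear_combination (h (Pi.single i 1 + Pi.single k 1) - h (Pi.single i 1) -
      h (Pi.single k 1)) - polar (Pi.single i 1) (Pi.single k 1)
  · intro h y
    obtain ⟨Ψ, hΨ⟩ := hC.exists_bilinear_apply_self α e
    have hΨ_add : ∀ x y, Ψ (x + y) (x + y) = Ψ x x + Ψ y y + (Ψ x y + Ψ y x) := by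
      intro x y
      simp only [map_add, LinearMap.add_apply]
      ring
    have hdiag := LinearMap.apply_self_eq_zero_of_add_flip_single_eq_zero Ψ (fun i k => by
      linear_combination hΨ (Pi.single i 1 + Pi.single k 1) - hΨ (Pi.single i 1) -
        hΨ (Pi.single k 1) - hΨ_add (Pi.single i 1) (Pi.single k 1) +
        polar (Pi.single i 1) (Pi.single k 1) + h i k) y
    linear_combination hdiag - hΨ y

theorem simpleRefl_invariant_iff {j : Fin n} (hp : p j j = 2) :
    (∀ y, C (simpleRefl p j y) = C y) ↔ C (Pi.single j 1) = 0 ∧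
      ∀ i k, assocT C (Pi.single i 1) (Pi.single k 1) (Pi.single j 1) =
        p i j * assocB C (Pi.single j 1) (Pi.single k 1) +
          p k j * assocB C (Pi.single j 1) (Pi.single i 1) := by
  have h := hC.reflection_invariant_iff (simpleRoot p j) (Pi.single j 1)
    (by rw [simpleRoot_single, hp])
  simp only [hC.forall_assocB_eq_iff, simpleRoot_single] at h
  exact h

theorem forall_simpleRefl_conditions_iff (hp : ∀ i, p i i = 2) :
    (∀ j, C (Pi.single j 1) = 0 ∧
      ∀ i k, assocT C (Pi.single i 1) (Pi.single k 1) (Pi.single j 1) =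
        p i j * assocB C (Pi.single j 1) (Pi.single k 1) +
          p k j * assocB C (Pi.single j 1) (Pi.single i 1)) ↔
    (∀ i, C (Pi.single i 1) = 0) ∧
      (∀ i j, i ≠ j →
        assocB C (Pi.single j 1) (Pi.single i 1) = p j i * assocB C (Pi.single i 1) (Pi.single j 1)) ∧
      (∀ i j k, i ≠ j → j ≠ k → i ≠ k →
        assocT C (Pi.single j 1) (Pi.single k 1) (Pi.single i 1) =
          p j i * assocB C (Pi.single i 1) (Pi.single k 1) +
            p k i * assocB C (Pi.single i 1) (Pi.single j 1)) := by
  constructor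
  · intro h
    refine ⟨fun i => (h i).1, fun i j _ => ?_, fun i j k _ _ _ => (h i).2 j k⟩
    have hjj := (h i).2 j j
    rw [hC.assocT_self_left] at hjj
    linarith
  · rintro ⟨h₁, h₂, hR⟩ j
    have hjk : ∀ k, assocT C (Pi.single j 1) (Pi.single k 1) (Pi.single j 1) =
        p j j * assocB C (Pi.single j 1) (Pi.single k 1) +
          p k j * assocB C (Pi.single j 1) (Pi.single j 1) := by
      intro k
      rw [assocT_swap₂₃, hC.assocT_self_left, hC.assocB_self, h₁, hp]
      ring
    refine ⟨h₁ j, fun i k => ?_⟩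
    rcases eq_or_ne i j with rfl | hij
    · exact hjk k
    rcases eq_or_ne k j with rfl | hkj
    · rw [assocT_rotate, assocT_swap₂₃, hjk i]
      ring
    rcases eq_or_ne i k with rfl | hik
    · rw [hC.assocT_self_left, h₂ j i hij.symm]
      ring
    · exact hR j i k hij.symm hik hkj.symm

end IsCubicForm

theorem distinct_conditions_iff_of_no_triangle
    (hzero : ∀ i j, i ≠ j → (p i j = 0 ↔ p j i = 0))
    (htri : ∀ i j k : Fin n, i ≠ j → j ≠ k → i ≠ k → p i j = 0 ∨ p j k = 0 ∨ p i k = 0)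
    (h₂ : ∀ i j, i ≠ j →
      assocB C (Pi.single j 1) (Pi.single i 1) = p j i * assocB C (Pi.single i 1) (Pi.single j 1)) :
    (∀ i j k, i ≠ j → j ≠ k → i ≠ k →
        assocT C (Pi.single j 1) (Pi.single k 1) (Pi.single i 1) =
          p j i * assocB C (Pi.single i 1) (Pi.single k 1) +
            p k i * assocB C (Pi.single i 1) (Pi.single j 1)) ↔
      (∀ i j k, i ≠ j → j ≠ k → i ≠ k →
        assocT C (Pi.single i 1) (Pi.single j 1) (Pi.single k 1) = 0 ∧
        p j i * assocB C (Pi.single i 1) (Pi.single k 1) +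
          p k i * assocB C (Pi.single i 1) (Pi.single j 1) = 0) := by
  constructor
  · intro hR i j k hij hjk hik
    have edge : ∀ a b c, a ≠ b → b ≠ c → a ≠ c → p a b = 0 →
        assocT C (Pi.single a 1) (Pi.single b 1) (Pi.single c 1) = 0 := by
      intro a b c hab hbc hac h
      rw [assocT_rotate, hR a b c hab hbc hac, (hzero a b hab).mp h, h₂ b a hab.symm, h]
      ring
    have hT : assocT C (Pi.single i 1) (Pi.single j 1) (Pi.single k 1) = 0 := by
      rcases htri i j k hij hjk hik with h | h | h
      · exact edge i j k hij hjk hik h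
      · rw [assocT_rotate]
        exact edge j k i hjk hik.symm hij.symm h
      · rw [assocT_swap₂₃]
        exact edge i k j hik hjk.symm hij h
    exact ⟨hT, by rw [← hR i j k hij hjk hik, ← assocT_rotate, hT]⟩
  · intro h₃ i j k hij hjk hik
    obtain ⟨hT, hsum⟩ := h₃ i j k hij hjk hik
    rw [← assocT_rotate, hT, hsum]

end

/-- Assume the Dynkin diagram has no triangles. A cubic form `C` on `Y = ℤⁿ` is
`W`-invariant iff (1) `C(eᵢ) = 0` for all `i`, (2) `B(eⱼ, eᵢ) = p(j,i)·B(eᵢ, eⱼ)` for `i ≠ j`,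
and (3) for pairwise distinct `i, j, k` both `T(eᵢ, eⱼ, eₖ) = 0` and
`p(j,i)·B(eᵢ, eₖ) + p(k,i)·B(eᵢ, eⱼ) = 0`. -/
theorem cubicForm_weylInvariant_iff {n : ℕ} (p : Fin n → Fin n → ℤ) (hp : IsGCM p)
    (htri : ∀ i j k : Fin n, i ≠ j → j ≠ k → i ≠ k → p i j = 0 ∨ p j k = 0 ∨ p i k = 0)
    (C : (Fin n → ℤ) → ℤ) (hC : IsCubicForm C) :
    (∀ (j : Fin n) (y : Fin n → ℤ), C (simpleRefl p j y) = C y) ↔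
      ((∀ i : Fin n, C (Pi.single i 1) = 0) ∧
       (∀ i j : Fin n, i ≠ j →
          assocB C (Pi.single j 1) (Pi.single i 1) =
            p j i * assocB C (Pi.single i 1) (Pi.single j 1)) ∧
       (∀ i j k : Fin n, i ≠ j → j ≠ k → i ≠ k →
          assocT C (Pi.single i 1) (Pi.single j 1) (Pi.single k 1) = 0 ∧
          p j i * assocB C (Pi.single i 1) (Pi.single k 1) +
            p k i * assocB C (Pi.single i 1) (Pi.single j 1) = 0)) := by
  obtain ⟨hdiag, -, hzero⟩ := hp
  rw [forall_congr' fun j => hC.simpleRefl_invariant_iff (hdiag j),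
    hC.forall_simpleRefl_conditions_iff hdiag]
  exact and_congr_right fun _ => and_congr_right fun h₂ =>
    distinct_conditions_iff_of_no_triangle hzero htri h₂
end

section
/- Let D₁, …, D_n : Y × Y → ℤ be antisymmetric ℤ-bilinear forms satisfying the closedness condition D_i(e_j, y) + D_j(e_i, y) − p(i,j)·D_j(e_j, y) = 0 for all indices i, j and all y ∈ Y. Then the ℤ-trilinear form D : Y × Y × Y → ℤ determined by D(e_i, y, z) = D_i(y, z) is totally antisymmetric (alternating). (Vanishing of the cohomology group E₁^{−3,4}.) -/
section

variable {R ι : Type*} [CommRing R] [Fintype ι] [DecidableEq ι]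

def IsCartanClosed (p : ι → ι → R) (D : ι → (ι → R) →ₗ[R] (ι → R) →ₗ[R] R) : Prop :=
  ∀ i j y, D i (Pi.single j 1) y + D j (Pi.single i 1) y - p i j * D j (Pi.single j 1) y = 0

namespace IsCartanClosed

variable {p : ι → ι → R} {D : ι → (ι → R) →ₗ[R] (ι → R) →ₗ[R] R}

theorem apply_single_self_eq_zero (halt : ∀ i, (D i).IsAlt) (hD : IsCartanClosed p D) (j : ι) :
    D j (Pi.single j 1) = 0 := by
  refine (Pi.basisFun R ι).ext fun k => ?_
  have hkj : D j (Pi.single k 1) (Pi.single j 1) = 0 := by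
    simpa only [(halt _).self_eq_zero, mul_zero, add_zero, sub_zero, zero_add] using
      hD k j (Pi.single j 1)
  simpa [hkj] using ((halt j).neg (Pi.single k 1) (Pi.single j 1)).symm

theorem apply_single_eq_neg (halt : ∀ i, (D i).IsAlt) (hD : IsCartanClosed p D) (i j : ι) :
    D i (Pi.single j 1) = -D j (Pi.single i 1) := by
  refine LinearMap.ext fun y => ?_
  have h := hD i j y
  rw [hD.apply_single_self_eq_zero halt j, LinearMap.zero_apply, mul_zero, sub_zero] at h
  simpa [eq_neg_iff_add_eq_zero] using h

theorem sum_mul_apply_eq_neg_swap (halt : ∀ i, (D i).IsAlt) (hD : IsCartanClosed p D)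
    (x y z : ι → R) : ∑ i, x i * D i y z = -∑ i, y i * D i x z := by
  let B := Fintype.linearCombination R fun i => (D i).flip z
  have hB : B = -B.flip := by
    refine LinearMap.ext_basis (Pi.basisFun R ι) (Pi.basisFun R ι) fun i j => ?_
    simp [B, Fintype.linearCombination_apply_single, hD.apply_single_eq_neg halt i j]
  simpa [B, Fintype.linearCombination_apply, LinearMap.sum_apply] using
    LinearMap.congr_fun₂ hB x y

end IsCartanClosed

end

theorem closed_antisymmetric_forms_alternating_general {n : ℕ} (p : Fin n → Fin n → ℤ)
    (D : Fin n → ((Fin n → ℤ) →ₗ[ℤ] (Fin n → ℤ) →ₗ[ℤ] ℤ))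
    (hanti : ∀ (i : Fin n) (y z : Fin n → ℤ), D i y z = -D i z y)
    (hclosed : ∀ (i j : Fin n) (y : Fin n → ℤ),
      D i (Pi.single j 1) y + D j (Pi.single i 1) y - p i j * D j (Pi.single j 1) y = 0) :
    ∀ x y z : Fin n → ℤ,
      (∑ i, x i * D i y z) = -(∑ i, y i * D i x z) ∧
      (∑ i, x i * D i y z) = -(∑ i, x i * D i z y) := by
  have halt : ∀ i, (D i).IsAlt := fun i y => by linarith [hanti i y y]
  intro x y z
  refine ⟨?_, ?_⟩
  · exact IsCartanClosed.sum_mul_apply_eq_neg_swap halt hclosed x y z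
  · simp_rw [hanti _ y z, mul_neg, Finset.sum_neg_distrib]

/-- Let `D₁, …, Dₙ` be antisymmetric `ℤ`-bilinear forms on `Y = ℤⁿ` satisfying
`Dᵢ(eⱼ, y) + Dⱼ(eᵢ, y) − p i j · Dⱼ(eⱼ, y) = 0` for all `i, j, y`. Then the trilinear form `D`
determined by `D(eᵢ, y, z) = Dᵢ(y, z)`, i.e. `D(x, y, z) = ∑ i, x i · Dᵢ(y, z)`, is totally
antisymmetric (alternating). -/
theorem closed_antisymmetric_forms_alternating {n : ℕ} (p : Fin n → Fin n → ℤ)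
    (hp : IsGCM p)
    (D : Fin n → ((Fin n → ℤ) →ₗ[ℤ] (Fin n → ℤ) →ₗ[ℤ] ℤ))
    (hanti : ∀ (i : Fin n) (y z : Fin n → ℤ), D i y z = -D i z y)
    (hclosed : ∀ (i j : Fin n) (y : Fin n → ℤ),
      D i (Pi.single j 1) y + D j (Pi.single i 1) y - p i j * D j (Pi.single j 1) y = 0) :
    ∀ x y z : Fin n → ℤ,
      (∑ i, x i * D i y z) = -(∑ i, y i * D i x z) ∧
      (∑ i, x i * D i y z) = -(∑ i, x i * D i z y) :=
  closed_antisymmetric_forms_alternating_general p D hanti hclosed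
end

section
/- If the family φ = (φ_{ij})_{i≠j} is exact, then B_φ(i, j) = 0 for all i ≠ j. -/
/-- A family `φ = (φᵢⱼ)` of linear forms on `Y = ℤⁿ` with `φᵢⱼ = φⱼᵢ` whenever `p i j = 0`. -/
def IsPhiFamily {n : ℕ} (p : Fin n → Fin n → ℤ)
    (φ : Fin n → Fin n → ((Fin n → ℤ) →ₗ[ℤ] ℤ)) : Prop :=
  ∀ i j : Fin n, i ≠ j → p i j = 0 → φ i j = φ j i

/-- The family `φ` is exact: `φᵢⱼ(y) = Dᵢ(eⱼ, y) + Dⱼ(eᵢ, y) − p i j · Dⱼ(eⱼ, y)` for some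
antisymmetric `ℤ`-bilinear forms `Dᵢ`. -/
def PhiExact {n : ℕ} (p : Fin n → Fin n → ℤ)
    (φ : Fin n → Fin n → ((Fin n → ℤ) →ₗ[ℤ] ℤ)) : Prop :=
  ∃ D : Fin n → ((Fin n → ℤ) →ₗ[ℤ] (Fin n → ℤ) →ₗ[ℤ] ℤ),
    (∀ (i : Fin n) (y z : Fin n → ℤ), D i y z = -D i z y) ∧
    ∀ i j : Fin n, i ≠ j → ∀ y : Fin n → ℤ,
      φ i j y = D i (Pi.single j 1) y + D j (Pi.single i 1) y - p i j * D j (Pi.single j 1) y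

/-- The family `φ` is closed. -/
def PhiClosed {n : ℕ} (p : Fin n → Fin n → ℤ)
    (φ : Fin n → Fin n → ((Fin n → ℤ) →ₗ[ℤ] ℤ)) : Prop :=
  (∀ i j k : Fin n, i ≠ j → j ≠ k → i ≠ k →
    0 = φ i j (Pi.single k 1) + φ i k (Pi.single j 1) + φ j k (Pi.single i 1)
      - p j k * φ i k (Pi.single k 1) - p i j * φ j k (Pi.single j 1)
      + (p j k * p i j - p i k) * φ j k (Pi.single k 1)) ∧
  (∀ i j : Fin n, i ≠ j → p i j ≠ 0 →
    0 = φ i j (Pi.single i 1) - p i j * φ j i (Pi.single j 1)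
      + (p j i * p i j - 1) * φ j i (Pi.single i 1))

/-- `B_φ(i, j) = φᵢⱼ(eᵢ) − φⱼᵢ(eᵢ) − p i j · φᵢⱼ(eⱼ)`. -/
def Bphi {n : ℕ} (p : Fin n → Fin n → ℤ)
    (φ : Fin n → Fin n → ((Fin n → ℤ) →ₗ[ℤ] ℤ)) (i j : Fin n) : ℤ :=
  φ i j (Pi.single i 1) - φ j i (Pi.single i 1) - p i j * φ i j (Pi.single j 1)

theorem PhiExact.exists_isAlt {n : ℕ} {p : Fin n → Fin n → ℤ}
    {φ : Fin n → Fin n → ((Fin n → ℤ) →ₗ[ℤ] ℤ)} (h : PhiExact p φ) :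
    ∃ D : Fin n → ((Fin n → ℤ) →ₗ[ℤ] (Fin n → ℤ) →ₗ[ℤ] ℤ), (∀ i, (D i).IsAlt) ∧
      ∀ i j : Fin n, i ≠ j → ∀ y : Fin n → ℤ,
        φ i j y = D i (Pi.single j 1) y + D j (Pi.single i 1) y - p i j * D j (Pi.single j 1) y := by
  obtain ⟨D, hskew, hD⟩ := h
  exact ⟨D, fun i => LinearMap.isAlt_iff_eq_neg_flip.mpr (LinearMap.ext₂ (hskew i)), hD⟩

theorem Bphi_eq_zero_of_exact_general {n : ℕ} (p : Fin n → Fin n → ℤ)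
    (φ : Fin n → Fin n → ((Fin n → ℤ) →ₗ[ℤ] ℤ))
    (hexact : PhiExact p φ) :
    ∀ i j : Fin n, i ≠ j → Bphi p φ i j = 0 := by
  intro i j hij
  obtain ⟨D, hAlt, hD⟩ := hexact.exists_isAlt
  rw [Bphi, hD i j hij, hD j i hij.symm, hD i j hij]
  -- What survives the alternating terms `D k x x` is `-p i j * (D j eⱼ eᵢ + D j eᵢ eⱼ)`.
  simp only [(hAlt i).self_eq_zero, (hAlt j).self_eq_zero,
    ← (hAlt j).neg (Pi.single j 1) (Pi.single i 1)]
  ring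

/-- If the family `φ = (φᵢⱼ)` is exact, then `B_φ(i, j) = 0` for all `i ≠ j`. -/
theorem Bphi_eq_zero_of_exact {n : ℕ} (p : Fin n → Fin n → ℤ) (hp : IsGCM p)
    (φ : Fin n → Fin n → ((Fin n → ℤ) →ₗ[ℤ] ℤ)) (hφ : IsPhiFamily p φ)
    (hexact : PhiExact p φ) :
    ∀ i j : Fin n, i ≠ j → Bphi p φ i j = 0 :=
  Bphi_eq_zero_of_exact_general p φ hexact
end

section
/- Assume that among any three pairwise distinct indices at least one pair satisfies p = 0 (no triangles in the Dynkin diagram). If the family φ = (φ_{ij})_{i≠j} is closed, then B_φ satisfies the Weyl-invariance relations: B_φ(j, i) = p(j,i)·B_φ(i, j) for all i ≠ j, and p(j,i)·B_φ(i, k) + p(k,i)·B_φ(i, j) = 0 for all pairwise distinct i, j, k. -/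
/-!
The relation `B_φ(j, i) = p(j,i) B_φ(i, j)` is a rearrangement of the second closedness
condition when `p(j,i) ≠ 0`, and both sides vanish when `p(j,i) = 0`, because then
`φⱼᵢ = φᵢⱼ`. For the three-index relation, absence of triangles leaves one pair with vanishing
Cartan entries. If it is `{i, j}` or `{i, k}`, both summands vanish; if it is `{j, k}`, the
relation is an alternating sum of four instances of the first closedness condition.
-/

variable {n : ℕ} {p : Fin n → Fin n → ℤ} {φ : Fin n → Fin n → ((Fin n → ℤ) →ₗ[ℤ] ℤ)}

theorem IsGCM.apply_eq_zero_comm (hp : IsGCM p) {i j : Fin n} (hij : i ≠ j) :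
    p i j = 0 ↔ p j i = 0 :=
  hp.2.2 i j hij

theorem Bphi_eq_zero_of_apply_eq_zero (hφ : IsPhiFamily p φ) {i j : Fin n} (hij : i ≠ j)
    (h : p i j = 0) : Bphi p φ i j = 0 := by
  simp [Bphi, hφ i j hij h, h]

theorem Bphi_swap_of_apply_ne_zero (hclosed : PhiClosed p φ) {i j : Fin n} (hij : i ≠ j)
    (h : p j i ≠ 0) : Bphi p φ j i = p j i * Bphi p φ i j := by
  unfold Bphi
  linear_combination -hclosed.2 j i hij.symm h

theorem Bphi_swap (hφ : IsPhiFamily p φ) (hclosed : PhiClosed p φ)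
    {i j : Fin n} (hij : i ≠ j) : Bphi p φ j i = p j i * Bphi p φ i j := by
  by_cases h : p j i = 0
  · rw [h, zero_mul, Bphi_eq_zero_of_apply_eq_zero hφ hij.symm h]
  · exact Bphi_swap_of_apply_ne_zero hclosed hij h

theorem Bphi_triple_of_apply_eq_zero (hclosed : PhiClosed p φ) {i j k : Fin n} (hij : i ≠ j)
    (hjk : j ≠ k) (hik : i ≠ k) (hjk₀ : p j k = 0) (hkj₀ : p k j = 0) (hφjk : φ j k = φ k j) :
    p j i * Bphi p φ i k + p k i * Bphi p φ i j = 0 := by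
  have h₁ := hclosed.1 i j k hij hjk hik
  have h₂ := hclosed.1 j i k hij.symm hik hjk
  have h₃ := hclosed.1 k j i hjk.symm hij.symm hik.symm
  have h₄ := hclosed.1 k i j hik.symm hij hjk.symm
  simp only [hjk₀, hkj₀, hφjk] at h₁ h₂ h₃ h₄
  unfold Bphi
  linear_combination -h₁ + h₂ - h₃ + h₄

/-- Assume the Dynkin diagram has no triangles. If the family `φ = (φᵢⱼ)` is
closed, then `B_φ` satisfies the Weyl-invariance relations `B_φ(j, i) = p j i · B_φ(i, j)` for
`i ≠ j`, and `p j i · B_φ(i, k) + p k i · B_φ(i, j) = 0` for pairwise distinct `i, j, k`. -/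
theorem Bphi_weyl_invariance_of_closed {n : ℕ} (p : Fin n → Fin n → ℤ) (hp : IsGCM p)
    (htri : ∀ i j k : Fin n, i ≠ j → j ≠ k → i ≠ k → p i j = 0 ∨ p j k = 0 ∨ p i k = 0)
    (φ : Fin n → Fin n → ((Fin n → ℤ) →ₗ[ℤ] ℤ)) (hφ : IsPhiFamily p φ)
    (hclosed : PhiClosed p φ) :
    (∀ i j : Fin n, i ≠ j → Bphi p φ j i = p j i * Bphi p φ i j) ∧
    (∀ i j k : Fin n, i ≠ j → j ≠ k → i ≠ k →
      p j i * Bphi p φ i k + p k i * Bphi p φ i j = 0) := by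
  refine ⟨fun i j hij => Bphi_swap hφ hclosed hij, fun i j k hij hjk hik => ?_⟩
  rcases htri i j k hij hjk hik with hij₀ | hjk₀ | hik₀
  · rw [(hp.apply_eq_zero_comm hij).mp hij₀, Bphi_eq_zero_of_apply_eq_zero hφ hij hij₀]
    ring
  · exact Bphi_triple_of_apply_eq_zero hclosed hij hjk hik hjk₀
      ((hp.apply_eq_zero_comm hjk).mp hjk₀) (hφ j k hjk hjk₀)
  · rw [(hp.apply_eq_zero_comm hik).mp hik₀, Bphi_eq_zero_of_apply_eq_zero hφ hik hik₀]
    ring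
end

section
/- Assume that among any three pairwise distinct indices at least one pair satisfies p = 0 (no triangles in the Dynkin diagram). If the family φ = (φ_{ij})_{i≠j} is closed and B_φ(i, j) = 0 for all i ≠ j, then φ is exact. -/
/-!
With `Dₐ(eₐ, e_c) := −φ_{ca}(eₐ)`, the exactness equations at `y = eₖ` hold for `k = j`, reduce to
`B_φ(i, j) = 0` for `k = i`, and for `i, j, k` distinct to `Dᵢ(eⱼ, eₖ) + Dⱼ(eᵢ, eₖ) = Gᵢⱼₖ`, where
`Gᵢⱼₖ := φᵢⱼ(eₖ) − pᵢⱼ φₖⱼ(eⱼ)`. On each three-element set of indices this is a system of rank two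
in three antisymmetric unknowns, solvable over `ℤ` once `G` is symmetric in its first two
arguments and has vanishing cyclic sums; the order of the indices singles out an integral solution.
Closedness and `B_φ = 0` give both identities on any triple containing a pair not joined in the
Dynkin diagram, which without triangles is every triple.
-/

section AltLift

variable {ι R : Type*} [LinearOrder ι] [AddCommGroup R]

def midTerm (G : ι → ι → ι → R) (a b c : ι) : R :=
  if (a < b ∧ b < c) ∨ (c < b ∧ b < a) then G a b c else 0

def altLift (G : ι → ι → ι → R) (a b c : ι) : R :=
  midTerm G a b c - midTerm G a c b

theorem altLift_swap (G : ι → ι → ι → R) (a b c : ι) :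
    altLift G a c b = -altLift G a b c := by
  simp only [altLift, neg_sub]

theorem altLift_self (G : ι → ι → ι → R) (a b : ι) : altLift G a b b = 0 :=
  sub_self _

theorem altLift_self_left (G : ι → ι → ι → R) (a c : ι) : altLift G a a c = 0 := by
  simp +contextual [altLift, midTerm, lt_asymm]

theorem altLift_self_right (G : ι → ι → ι → R) (a b : ι) : altLift G a b a = 0 := by
  rw [altLift_swap, altLift_self_left, neg_zero]

theorem altLift_add_altLift {G : ι → ι → ι → R}
    (hcomm : ∀ i j k, i ≠ j → j ≠ k → i ≠ k → G i j k = G j i k)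
    (hcyc : ∀ i j k, i ≠ j → j ≠ k → i ≠ k → G i j k + G j k i + G k i j = 0)
    {i j k : ι} (hij : i ≠ j) (hjk : j ≠ k) (hik : i ≠ k) :
    altLift G i j k + altLift G j i k = G i j k := by
  -- Only the `midTerm`s whose middle argument is the middle one of `i, j, k` survive; if that is
  -- `k`, the two surviving terms add up to `G i j k` by the cyclic identity.
  have := hcomm i j k hij hjk hik
  have := hcomm i k j hik hjk.symm hij
  have := hcyc i j k hij hjk hik
  simp only [altLift, midTerm]
  split_ifs <;> grind

end AltLift

theorem Matrix.toLinearMap₂'_apply_swap_of_antisymm {R ι : Type*} [CommRing R] [Fintype ι]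
    [DecidableEq ι] {M : Matrix ι ι R} (hM : ∀ b c, M b c = -M c b) (x y : ι → R) :
    Matrix.toLinearMap₂' R M x y = -Matrix.toLinearMap₂' R M y x := by
  have : Matrix.toLinearMap₂' R M = -(Matrix.toLinearMap₂' R M).flip :=
    LinearMap.ext_basis (Pi.basisFun R ι) (Pi.basisFun R ι) fun b c => by
      simp [Matrix.toLinearMap₂'_apply, Pi.single_apply, hM b c]
  exact LinearMap.congr_fun₂ this x y

namespace PhiFamily

variable {n : ℕ} {p : Fin n → Fin n → ℤ} {φ : Fin n → Fin n → ((Fin n → ℤ) →ₗ[ℤ] ℤ)}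

variable (p φ) in
def Gphi (i j k : Fin n) : ℤ :=
  φ i j (Pi.single k 1) - p i j * φ k j (Pi.single j 1)

section Closed

variable (hφ : IsPhiFamily p φ) (hclosed : PhiClosed p φ)
  (hB : ∀ i j : Fin n, i ≠ j → Bphi p φ i j = 0)
include hφ hclosed hB

theorem Gphi_comm_of_eq_zero {i j k : Fin n} (hij : i ≠ j) (hjk : j ≠ k) (hik : i ≠ k)
    (h0 : p j k = 0) : Gphi p φ i j k = Gphi p φ j i k := by
  have hC₁ := hclosed.1 i j k hij hjk hik
  have hC₂ := hclosed.1 j i k hij.symm hik hjk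
  have hBik := hB i k hik
  rw [Bphi] at hBik
  rw [hφ j k hjk h0, h0] at hC₁ hC₂
  rw [Gphi, Gphi]
  linear_combination -hC₁ + hC₂ - p j i * hBik

variable (hp : IsGCM p)
include hp

theorem Gphi_cyclic_of_eq_zero {i j k : Fin n} (hij : i ≠ j) (hjk : j ≠ k) (hik : i ≠ k)
    (h0 : p i k = 0) : Gphi p φ i j k + Gphi p φ j k i + Gphi p φ k i j = 0 := by
  have hC := hclosed.1 i j k hij hjk hik
  have hBjk := hB j k hjk
  rw [Bphi] at hBjk
  rw [hφ i k hik h0, h0] at hC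
  rw [Gphi, Gphi, Gphi, hφ i k hik h0, (hp.2.2 i k hik).1 h0]
  linear_combination -hC + p i j * hBjk

variable (htri : ∀ i j k : Fin n, i ≠ j → j ≠ k → i ≠ k → p i j = 0 ∨ p j k = 0 ∨ p i k = 0)
include htri

theorem Gphi_cyclic {i j k : Fin n} (hij : i ≠ j) (hjk : j ≠ k) (hik : i ≠ k) :
    Gphi p φ i j k + Gphi p φ j k i + Gphi p φ k i j = 0 := by
  rcases htri i j k hij hjk hik with h | h | h
  · have := Gphi_cyclic_of_eq_zero hφ hclosed hB hp hjk hik.symm hij.symm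
      ((hp.2.2 i j hij).1 h)
    linear_combination this
  · have := Gphi_cyclic_of_eq_zero hφ hclosed hB hp hik.symm hij hjk.symm
      ((hp.2.2 j k hjk).1 h)
    linear_combination this
  · exact Gphi_cyclic_of_eq_zero hφ hclosed hB hp hij hjk hik h

theorem Gphi_comm {i j k : Fin n} (hij : i ≠ j) (hjk : j ≠ k) (hik : i ≠ k) :
    Gphi p φ i j k = Gphi p φ j i k := by
  by_cases h : p i j = 0
  · rw [Gphi, Gphi, hφ i j hij h, h, (hp.2.2 i j hij).1 h]
    ring
  rcases htri i j k hij hjk hik with h' | h' | h'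
  · exact absurd h' h
  · exact Gphi_comm_of_eq_zero hφ hclosed hB hij hjk hik h'
  · exact (Gphi_comm_of_eq_zero hφ hclosed hB hij.symm hik hjk h').symm

end Closed

variable (p φ) in
def primitiveEntry (a b c : Fin n) : ℤ :=
  altLift (Gphi p φ) a b c + (if c = a then φ b a (Pi.single a 1) else 0)
    - (if b = a then φ c a (Pi.single a 1) else 0)

theorem primitiveEntry_swap (a b c : Fin n) :
    primitiveEntry p φ a b c = -primitiveEntry p φ a c b := by
  rw [primitiveEntry, primitiveEntry, altLift_swap]
  ring

theorem apply_single_eq_primitiveEntry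
    (hcomm : ∀ i j k : Fin n, i ≠ j → j ≠ k → i ≠ k → Gphi p φ i j k = Gphi p φ j i k)
    (hcyc : ∀ i j k : Fin n, i ≠ j → j ≠ k → i ≠ k →
      Gphi p φ i j k + Gphi p φ j k i + Gphi p φ k i j = 0)
    (hB : ∀ i j : Fin n, i ≠ j → Bphi p φ i j = 0) {i j : Fin n} (hij : i ≠ j) (k : Fin n) :
    φ i j (Pi.single k 1) = primitiveEntry p φ i j k + primitiveEntry p φ j i k
      - p i j * primitiveEntry p φ j j k := by
  rcases eq_or_ne k j with rfl | hkj
  · simp [primitiveEntry, altLift_self, altLift_self_right, hij]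
  rcases eq_or_ne k i with rfl | hki
  · have := hB k j hij
    rw [Bphi] at this
    simp only [primitiveEntry, altLift_self, altLift_self_left, altLift_self_right, if_true,
      if_neg hkj, if_neg hkj.symm]
    linear_combination this
  · have := altLift_add_altLift hcomm hcyc hij hkj.symm hki.symm
    simp only [primitiveEntry, altLift_self_left, if_true, if_neg hkj, if_neg hki, if_neg hij,
      if_neg hij.symm, Gphi] at this ⊢
    linear_combination -this

end PhiFamily

/-- Assume the Dynkin diagram has no triangles. If the family `φ = (φᵢⱼ)` is
closed and `B_φ(i, j) = 0` for all `i ≠ j`, then `φ` is exact. -/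
theorem exact_of_closed_of_Bphi_eq_zero {n : ℕ} (p : Fin n → Fin n → ℤ) (hp : IsGCM p)
    (htri : ∀ i j k : Fin n, i ≠ j → j ≠ k → i ≠ k → p i j = 0 ∨ p j k = 0 ∨ p i k = 0)
    (φ : Fin n → Fin n → ((Fin n → ℤ) →ₗ[ℤ] ℤ)) (hφ : IsPhiFamily p φ)
    (hclosed : PhiClosed p φ) (hB : ∀ i j : Fin n, i ≠ j → Bphi p φ i j = 0) :
    PhiExact p φ := by
  let D : Fin n → (Fin n → ℤ) →ₗ[ℤ] (Fin n → ℤ) →ₗ[ℤ] ℤ :=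
    fun a => Matrix.toLinearMap₂' ℤ (Matrix.of (PhiFamily.primitiveEntry p φ a))
  have hentry {i j : Fin n} (hij : i ≠ j) (k : Fin n) :=
    PhiFamily.apply_single_eq_primitiveEntry
      (fun _ _ _ => PhiFamily.Gphi_comm hφ hclosed hB hp htri)
      (fun _ _ _ => PhiFamily.Gphi_cyclic hφ hclosed hB hp htri) hB hij k
  refine ⟨D, fun a => Matrix.toLinearMap₂'_apply_swap_of_antisymm
    (PhiFamily.primitiveEntry_swap a), fun i j hij y => ?_⟩
  have hφD : φ i j = D i (Pi.single j 1) + D j (Pi.single i 1) - p i j • D j (Pi.single j 1) :=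
    (Pi.basisFun ℤ (Fin n)).ext fun k => by
      simpa [D, Matrix.toLinearMap₂'_apply, Pi.single_apply] using hentry hij k
  simpa using LinearMap.congr_fun hφD y
end

section
/- Let n = 2 and let p be the Cartan matrix of type G₂: p(1,1) = p(2,2) = 2, p(1,2) = −3, p(2,1) = −1. Then a pair of integers (d₁₂₁, d₂₁₂) is exact — i.e. there exist linear forms φ₁₂, φ₂₁ : ℤ² → ℤ with d₁₂₁ = φ₁₂(e₁) + 2φ₂₁(e₁) + 3φ₂₁(e₂) and d₂₁₂ = φ₂₁(e₂) + 2φ₁₂(e₂) + φ₁₂(e₁) — if and only if d₁₂₁ − d₂₁₂ is even. Consequently the quotient of all pairs by the exact ones is isomorphic to ℤ/2ℤ (this computes CH³(G₂) ≅ ℤ/2ℤ). -/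
/-!
Subtracting the two defining equations gives
`d₁₂₁ − d₂₁₂ = 2 (φ₂₁(e₁) + φ₂₁(e₂) − φ₁₂(e₂))`, so exact pairs have even difference;
conversely `φ₂₁ = 0` and `φ₁₂ = (d₁₂₁, −k)` realise any pair with `d₁₂₁ − d₂₁₂ = 2k`.
The quotient map is then `d ↦ d₁₂₁ − d₂₁₂ mod 2`.
-/

/-- A pair of integers `(d₁₂₁, d₂₁₂)` is exact for the `G₂` Cartan matrix
(`p(1,1) = p(2,2) = 2`, `p(1,2) = −3`, `p(2,1) = −1`): there are linear forms
`φ₁₂, φ₂₁ : ℤ² → ℤ` with `d₁₂₁ = φ₁₂(e₁) + 2φ₂₁(e₁) + 3φ₂₁(e₂)` and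
`d₂₁₂ = φ₂₁(e₂) + 2φ₁₂(e₂) + φ₁₂(e₁)`. -/
def G2Exact (d : ℤ × ℤ) : Prop :=
  ∃ φ₁₂ φ₂₁ : (Fin 2 → ℤ) →ₗ[ℤ] ℤ,
    d.1 = φ₁₂ (Pi.single 0 1) + 2 * φ₂₁ (Pi.single 0 1) + 3 * φ₂₁ (Pi.single 1 1) ∧
    d.2 = φ₂₁ (Pi.single 1 1) + 2 * φ₁₂ (Pi.single 1 1) + φ₁₂ (Pi.single 0 1)

theorem exists_linearMap_apply_single {R ι : Type*} [CommSemiring R] [Fintype ι]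
    [DecidableEq ι] (v : ι → R) :
    ∃ φ : (ι → R) →ₗ[R] R, ∀ i, φ (Pi.single i 1) = v i :=
  ⟨(Pi.basisFun R ι).constr R v, fun i => by
    rw [← Pi.basisFun_apply, Module.Basis.constr_basis]⟩

theorem g2Exact_iff_two_dvd_sub (d : ℤ × ℤ) : G2Exact d ↔ 2 ∣ d.1 - d.2 := by
  constructor
  · rintro ⟨φ₁₂, φ₂₁, h₁, h₂⟩
    exact ⟨φ₂₁ (Pi.single 0 1) + φ₂₁ (Pi.single 1 1) - φ₁₂ (Pi.single 1 1), by
      rw [h₁, h₂]; ring⟩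
  · rintro ⟨k, hk⟩
    obtain ⟨φ, hφ⟩ := exists_linearMap_apply_single ![d.1, -k]
    refine ⟨φ, 0, ?_, ?_⟩
    · simp [hφ 0]
    · simp only [hφ, LinearMap.zero_apply, Matrix.cons_val_zero, Matrix.cons_val_one]
      linarith

def subMod (n : ℕ) : ℤ × ℤ →+ ZMod n :=
  (Int.castAddHom (ZMod n)).comp (AddMonoidHom.fst ℤ ℤ - AddMonoidHom.snd ℤ ℤ)

theorem subMod_apply (n : ℕ) (d : ℤ × ℤ) : subMod n d = ((d.1 - d.2 : ℤ) : ZMod n) := rfl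

theorem subMod_surjective (n : ℕ) : Function.Surjective (subMod n) := fun x => by
  obtain ⟨m, rfl⟩ := ZMod.intCast_surjective x
  exact ⟨(m, 0), by rw [subMod_apply, sub_zero]⟩

theorem subMod_eq_zero_iff (n : ℕ) (d : ℤ × ℤ) : subMod n d = 0 ↔ (n : ℤ) ∣ d.1 - d.2 := by
  rw [subMod_apply, ZMod.intCast_zmod_eq_zero_iff_dvd]

/-- For the `G₂` Cartan matrix, a pair `(d₁₂₁, d₂₁₂)` is exact iff
`d₁₂₁ − d₂₁₂` is even; consequently the quotient of all pairs by the exact ones is isomorphic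
to `ℤ/2ℤ` (there is a surjective homomorphism `ℤ × ℤ →+ ℤ/2ℤ` whose kernel is exactly the set
of exact pairs). This computes `CH³(G₂) ≅ ℤ/2ℤ`. -/
theorem g2_exact_iff_even_and_quotient_zmod2 :
    (∀ d : ℤ × ℤ, G2Exact d ↔ 2 ∣ (d.1 - d.2)) ∧
    (∃ f : ℤ × ℤ →+ ZMod 2, Function.Surjective f ∧ ∀ d : ℤ × ℤ, f d = 0 ↔ G2Exact d) :=
  ⟨g2Exact_iff_two_dvd_sub, subMod 2, subMod_surjective 2, fun d => by
    rw [subMod_eq_zero_iff, g2Exact_iff_two_dvd_sub, Nat.cast_ofNat]⟩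
end

section
/- Let n = 3 and let p be the Cartan matrix of type B₃ ordered starting from the short root: p(i,i) = 2, p(1,2) = −2, p(2,1) = −1, p(2,3) = p(3,2) = −1, p(1,3) = p(3,1) = 0. Then a closed family d = (d_{ijk}) is exact if and only if d₃₂₁ + d₁₂₃ − d₁₂₁ + d₂₁₂ − d₃₁₂ − d₂₁₃ is even. (This computes CH³(Spin₇) ≅ ℤ/2ℤ.) -/
/-- The index triples `(i, j, k)` with `i ≠ j`, `j ≠ k`, and (`i ≠ k` or `p i j ≠ 0`). -/
def ValidTriple {n : ℕ} (p : Fin n → Fin n → ℤ) (i j k : Fin n) : Prop :=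
  i ≠ j ∧ j ≠ k ∧ (i ≠ k ∨ p i j ≠ 0)

/-- A family `d = (dᵢⱼₖ)` of integers (indexed by valid triples) is closed if
`dᵢⱼₖ = dⱼᵢₖ` whenever `p i j = 0`, `dᵢⱼₖ = dᵢₖⱼ` whenever `p j k = 0`, and
`dᵢⱼᵢ = dⱼᵢⱼ` whenever `p i j = p j i = −1`. -/
def DClosed {n : ℕ} (p : Fin n → Fin n → ℤ) (d : Fin n → Fin n → Fin n → ℤ) : Prop :=
  (∀ i j k, ValidTriple p i j k → p i j = 0 → d i j k = d j i k) ∧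
  (∀ i j k, ValidTriple p i j k → p j k = 0 → d i j k = d i k j) ∧
  (∀ i j, i ≠ j → p i j = -1 → p j i = -1 → d i j i = d j i j)

/-- A family `d = (dᵢⱼₖ)` is exact if there are linear forms `φᵢⱼ : Y → ℤ` for `i ≠ j`, with
`φᵢᵢ = 0` and `φᵢⱼ = φⱼᵢ` whenever `p i j = 0`, such that
`dᵢⱼₖ = φᵢⱼ(eₖ) + φᵢₖ(eⱼ − p j k·eₖ) + φⱼₖ(eᵢ − p i j·eⱼ − p i k·eₖ + p j k·p i j·eₖ)`
for every valid triple. -/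
def DExact {n : ℕ} (p : Fin n → Fin n → ℤ) (d : Fin n → Fin n → Fin n → ℤ) : Prop :=
  ∃ φ : Fin n → Fin n → ((Fin n → ℤ) →ₗ[ℤ] ℤ),
    (∀ i, φ i i = 0) ∧
    (∀ i j, i ≠ j → p i j = 0 → φ i j = φ j i) ∧
    ∀ i j k, ValidTriple p i j k →
      d i j k = φ i j (Pi.single k 1)
        + φ i k (Pi.single j 1 - p j k • Pi.single k 1)
        + φ j k (Pi.single i 1 - p i j • Pi.single j 1 - p i k • Pi.single k 1
            + (p j k * p i j) • Pi.single k 1)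

/-- The Cartan matrix of type `B₃` ordered starting from the short root (indices `1, 2, 3`
are `0, 1, 2`): `p(1,2) = −2`, `p(2,1) = −1`, `p(2,3) = p(3,2) = −1`, `p(1,3) = p(3,1) = 0`. -/
def cartanB3 : Fin 3 → Fin 3 → ℤ := ![![2, -2, 0], ![-1, 2, -1], ![0, -1, 2]]

/-!
Writing each `φᵢⱼ` through its values `c i j k = φᵢⱼ(eₖ)` turns exactness into the linear system
`d = coboundary p c` over `ℤ`. For `B₃` the combination in question evaluates on every coboundary to
`2 (c₁₂₁ + c₁₂₂ − c₂₁₁)` (indices from `0`), so it is even on exact families. Conversely, a closed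
family has only seven independent entries (closedness identifies `d₀₂₁ = d₂₀₁`, `d₁₀₂ = d₁₂₀`,
`d₁₂₁ = d₂₁₂` among the ten valid triples), and when the combination equals `2t` an explicit
table `c` solves the system.
-/

/-- The right-hand side of the exactness equation, for `φᵢⱼ` given by `c i j k = φᵢⱼ(eₖ)`. -/
def coboundary {n : ℕ} (p : Fin n → Fin n → ℤ) (c : Fin n → Fin n → Fin n → ℤ)
    (i j k : Fin n) : ℤ :=
  c i j k + c i k j - p j k * c i k k + c j k i - p i j * c j k j - p i k * c j k k
    + p j k * p i j * c j k k

theorem dExact_iff_exists_coboundary {n : ℕ} (p : Fin n → Fin n → ℤ)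
    (d : Fin n → Fin n → Fin n → ℤ) :
    DExact p d ↔ ∃ c : Fin n → Fin n → Fin n → ℤ,
      (∀ i, c i i = 0) ∧ (∀ i j, i ≠ j → p i j = 0 → c i j = c j i) ∧
      ∀ i j k, ValidTriple p i j k → d i j k = coboundary p c i j k := by
  have expand (φ : Fin n → Fin n → ((Fin n → ℤ) →ₗ[ℤ] ℤ)) (i j k : Fin n) :
      φ i j (Pi.single k 1) + φ i k (Pi.single j 1 - p j k • Pi.single k 1)
        + φ j k (Pi.single i 1 - p i j • Pi.single j 1 - p i k • Pi.single k 1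
            + (p j k * p i j) • Pi.single k 1) =
      coboundary p (fun i j k => φ i j (Pi.single k 1)) i j k := by
    simp only [coboundary, map_add, map_sub, map_smul, smul_eq_mul]
    ring
  constructor
  · rintro ⟨φ, hφ0, hφsymm, hφ⟩
    refine ⟨fun i j k => φ i j (Pi.single k 1), fun i => ?_, fun i j hij hp => ?_,
      fun i j k h => (hφ i j k h).trans (expand φ i j k)⟩
    · ext; simp [hφ0]
    · simp [hφsymm i j hij hp]
  · rintro ⟨c, hc0, hcsymm, hc⟩
    let φ i j := (Pi.basisFun ℤ (Fin n)).constr ℤ (c i j)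
    have hφc : (fun i j k => φ i j (Pi.single k 1)) = c := by
      ext i j k
      rw [← Pi.basisFun_apply, Module.Basis.constr_basis]
    refine ⟨φ, fun i => ?_, fun i j hij hp => ?_, fun i j k h => ?_⟩
    · simp [φ, hc0]
    · simp [φ, hcsymm i j hij hp]
    · rw [expand, hφc, hc i j k h]

theorem cartanB3_form_eq_of_eq_coboundary {d c : Fin 3 → Fin 3 → Fin 3 → ℤ}
    (hc0 : ∀ i, c i i = 0) (hc20 : c 2 0 = c 0 2)
    (hdc : ∀ i j k, ValidTriple cartanB3 i j k → d i j k = coboundary cartanB3 c i j k) :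
    d 2 1 0 + d 0 1 2 - d 0 1 0 + d 1 0 1 - d 2 0 1 - d 1 0 2 =
      2 * (c 1 2 1 + c 1 2 2 - c 2 1 1) := by
  have e (i j k : Fin 3) (h : ValidTriple cartanB3 i j k := by unfold ValidTriple; decide) :=
    hdc i j k h
  rw [e 2 1 0, e 0 1 2, e 0 1 0, e 1 0 1, e 2 0 1, e 1 0 2]
  simp only [coboundary, cartanB3, hc0 0, hc0 1, hc20, Pi.zero_apply, Matrix.cons_val',
    Matrix.cons_val_zero, Matrix.cons_val_one, Matrix.cons_val, Matrix.cons_val_fin_one]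
  ring

theorem DClosed.cartanB3_eqs {d : Fin 3 → Fin 3 → Fin 3 → ℤ} (hd : DClosed cartanB3 d) :
    d 0 2 1 = d 2 0 1 ∧ d 1 0 2 = d 1 2 0 ∧ d 1 2 1 = d 2 1 2 := by
  obtain ⟨hij, hjk, hiji⟩ := hd
  exact ⟨hij 0 2 1 (by unfold ValidTriple; decide) (by decide),
    hjk 1 0 2 (by unfold ValidTriple; decide) (by decide),
    hiji 1 2 (by decide) (by decide) (by decide)⟩

def b3Primitive (d : Fin 3 → Fin 3 → Fin 3 → ℤ) (t : ℤ) : Fin 3 → Fin 3 → Fin 3 → ℤ :=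
  ![![0, ![d 1 0 1 - d 0 2 1, d 0 2 1, 0], 0],
    ![![d 0 1 0 - d 1 0 1 + d 0 2 1, 0, d 2 1 0 - d 0 1 0 + d 1 0 1 - d 0 2 1], 0,
      ![d 1 0 2 - d 2 1 0 + d 0 1 0 - d 1 0 1 + d 0 2 1, t, 0]],
    ![0, ![0, 0, d 1 2 1 - t], 0]]

theorem eq_coboundary_b3Primitive {d : Fin 3 → Fin 3 → Fin 3 → ℤ} (hd : DClosed cartanB3 d)
    {t : ℤ} (ht : d 2 1 0 + d 0 1 2 - d 0 1 0 + d 1 0 1 - d 2 0 1 - d 1 0 2 = 2 * t) :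
    ∀ i j k, ValidTriple cartanB3 i j k →
      d i j k = coboundary cartanB3 (b3Primitive d t) i j k := by
  obtain ⟨h021, h102, h121⟩ := hd.cartanB3_eqs
  intro i j k h
  fin_cases i <;> fin_cases j <;> fin_cases k <;> simp [ValidTriple, cartanB3] at h <;>
    simp [coboundary, b3Primitive, cartanB3] <;> linarith

/-- For the `B₃` Cartan matrix ordered starting from the short root, a closed
family `d = (dᵢⱼₖ)` is exact iff `d₃₂₁ + d₁₂₃ − d₁₂₁ + d₂₁₂ − d₃₁₂ − d₂₁₃` is even.
(This computes `CH³(Spin₇) ≅ ℤ/2ℤ`.) -/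
theorem b3_closed_exact_iff_even (d : Fin 3 → Fin 3 → Fin 3 → ℤ)
    (hd : DClosed cartanB3 d) :
    DExact cartanB3 d ↔
      2 ∣ (d 2 1 0 + d 0 1 2 - d 0 1 0 + d 1 0 1 - d 2 0 1 - d 1 0 2) := by
  rw [dExact_iff_exists_coboundary]
  constructor
  · rintro ⟨c, hc0, hcsymm, hdc⟩
    exact ⟨_, cartanB3_form_eq_of_eq_coboundary hc0 (hcsymm 2 0 (by decide) (by decide)) hdc⟩
  · rintro ⟨t, ht⟩
    refine ⟨b3Primitive d t, fun i => ?_, fun i j hij hp => ?_, eq_coboundary_b3Primitive hd ht⟩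
    · fin_cases i <;> rfl
    · fin_cases i <;> fin_cases j <;> first | rfl | simp [cartanB3] at hij hp
end
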